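/- For finite multisets M, N over a type A and an irreflexive transitive relation r, M >ᵐᵘˡ N (multiset extension of r) holds if and only if M ≠ N and for every d, (∀ e, r e d → M(e) = N(e)) implies M(d) ≥ N(d). -/
import Mathlib


def MulExt {A : Type*} (r : A → A → Prop) (M N : Multiset A) : Prop :=
  ∃ X Y Z : Multiset A, X ≠ 0 ∧ M = X + Z ∧ N = Y + Z ∧ ∀ y ∈ Y, ∃ x ∈ X, r x y

lemma exists_r_maximal {A : Type*} (r : A → A → Prop)
    (hirr : ∀ x, ¬ r x x)
    (htrans : ∀ x y z, r x y → r y z → r x z)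
    (s : Multiset A) (hs : s ≠ 0) : ∃ x ∈ s, ∀ y ∈ s, ¬ r y x := by
  induction s using Multiset.induction with
  | empty => simp at hs
  | cons a t ih =>
    by_cases ht : t = 0
    · subst ht
      exact ⟨a, by simp, by simpa using hirr a⟩
    · obtain ⟨x, hxt, hmax⟩ := ih ht
      by_cases hax : r a x
      · refine ⟨a, by simp, ?_⟩
        intro y hy hya
        rcases Multiset.mem_cons.mp hy with h | h
        · exact hirr a (h ▸ hya)
        · exact hmax y h (htrans y a x hya hax)
      · refine ⟨x, Multiset.mem_cons_of_mem hxt, ?_⟩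
        intro y hy hyx
        rcases Multiset.mem_cons.mp hy with h | h
        · exact hax (h ▸ hyx)
        · exact hmax y h hyx

theorem mulext_iff_counts {A : Type*} [DecidableEq A] (r : A → A → Prop)
    (hirr : ∀ x, ¬ r x x)
    (htrans : ∀ x y z, r x y → r y z → r x z)
    (M N : Multiset A) :
    MulExt r M N ↔
      M ≠ N ∧ ∀ d, (∀ e, r e d → M.count e = N.count e) → M.count d ≥ N.count d := by
  classical
  constructor
  · rintro ⟨X, Y, Z, hX, hM, hN, hY⟩
    constructor
    · intro hMN
      have hXY : X = Y := by
        have h : X + Z = Y + Z := by rw [← hM, ← hN, hMN]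
        exact add_right_cancel h
      obtain ⟨m, hm, hmax⟩ := exists_r_maximal r hirr htrans X hX
      obtain ⟨x, hx, hr⟩ := hY m (hXY ▸ hm)
      exact hmax x hx hr
    · intro d hcnt
      subst hM hN
      simp only [Multiset.count_add] at hcnt ⊢
      have key : Y.count d ≤ X.count d := by
        by_contra h
        push_neg at h
        have hdY : d ∈ Y := by
          rw [← Multiset.count_pos]; omega
        set X' := X.filter (fun e => r e d) with hX'
        have hX'ne : X' ≠ 0 := by
          obtain ⟨x, hx, hr⟩ := hY d hdY
          intro h0
          have hmem : x ∈ X' := Multiset.mem_filter.mpr ⟨hx, hr⟩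
          simp [h0] at hmem
        obtain ⟨m, hm, hmax⟩ := exists_r_maximal r hirr htrans X' hX'ne
        obtain ⟨hmX, hmd⟩ := Multiset.mem_filter.mp hm
        have hcm : X.count m = Y.count m := by
          have := hcnt m hmd; omega
        have hmY : m ∈ Y := by
          rw [← Multiset.count_pos, ← hcm, Multiset.count_pos]; exact hmX
        obtain ⟨x, hx, hr⟩ := hY m hmY
        exact hmax x (Multiset.mem_filter.mpr ⟨hx, htrans x m d hr hmd⟩) hr
      omega
  · rintro ⟨hne, hcond⟩
    have claim : ∀ d, M.count d < N.count d → ∃ x, r x d ∧ N.count x < M.count x := by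
      intro d hd
      set D := (M + N).filter (fun e => r e d ∧ M.count e ≠ N.count e) with hD
      have hDne : D ≠ 0 := by
        have hnge : ¬ (M.count d ≥ N.count d) := by omega
        have h2 := mt (hcond d) hnge
        push_neg at h2
        obtain ⟨e, hre, hne2⟩ := h2
        have heM : e ∈ M + N := by
          rw [← Multiset.count_pos]; simp only [Multiset.count_add]; omega
        intro h0
        have hmem : e ∈ D := Multiset.mem_filter.mpr ⟨heM, hre, hne2⟩
        simp [h0] at hmem
      obtain ⟨x, hx, hmax⟩ := exists_r_maximal r hirr htrans D hDne
      obtain ⟨hxMN, hrx, hnex⟩ := Multiset.mem_filter.mp hx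
      have hall : ∀ e, r e x → M.count e = N.count e := by
        intro e hre
        by_contra hnee
        have heM : e ∈ M + N := by
          rw [← Multiset.count_pos]; simp only [Multiset.count_add]; omega
        exact hmax e (Multiset.mem_filter.mpr ⟨heM, htrans e x d hre hrx, hnee⟩) hre
      have hge := hcond x hall
      exact ⟨x, hrx, by omega⟩
    refine ⟨M - N, N - M, M ∩ N, ?_, ?_, ?_, ?_⟩
    · intro h0
      have hMle : M ≤ N := by exact tsub_eq_zero_iff_le.mp h0
      have hNM : N - M ≠ 0 := by
        intro h1
        exact hne (le_antisymm hMle (tsub_eq_zero_iff_le.mp h1))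
      obtain ⟨d, hd⟩ := Multiset.exists_mem_of_ne_zero hNM
      have hd' : M.count d < N.count d := by
        have := Multiset.count_pos.mpr hd
        rw [Multiset.count_sub] at this; omega
      obtain ⟨x, _, hx⟩ := claim d hd'
      have hmem : x ∈ M - N := by rw [← Multiset.count_pos, Multiset.count_sub]; omega
      simp [h0] at hmem
    · exact (Multiset.sub_add_inter M N).symm
    · rw [Multiset.inter_comm]; exact (Multiset.sub_add_inter N M).symm
    · intro y hy
      have hy' : M.count y < N.count y := by
        have := Multiset.count_pos.mpr hy
        rw [Multiset.count_sub] at this; omega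
      obtain ⟨x, hr, hx⟩ := claim y hy'
      exact ⟨x, by rw [← Multiset.count_pos, Multiset.count_sub]; omega, hr⟩
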